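/- arXiv:1910.02486 — 3 statements merged into one kernel-verified Lean document; each statement's English description precedes it below -/
import Mathlib

section
/- Let f: [0,1] → [0,1] be a strictly increasing bijection with f(ν*) = 1/2. The aggregative operator a(x,y) = f⁻¹[f(x) + f(y) - 1/2] is self-dual with respect to the negation n(x) = f⁻¹(1 - f(x)): whenever 0 < f(x) + f(y) - 1/2 < 1, we have n(a(x,y)) = a(n(x), n(y)). -/
/-! Since `f ∘ g` is the identity on `[0,1]` and `cut` takes values there, both sides are `g`
applied to `1 - cut (f x + f y - 1/2)`: the reflection `t ↦ 1 - t` commutes with `cut`. -/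

noncomputable def cut (x : ℝ) : ℝ := max 0 (min 1 x)

theorem cut_mem_Icc (t : ℝ) : cut t ∈ Set.Icc (0:ℝ) 1 :=
  ⟨le_max_left _ _, max_le zero_le_one (min_le_left _ _)⟩

theorem cut_one_sub (t : ℝ) : cut (1 - t) = 1 - cut t := by
  unfold cut
  simp only [min_def, max_def]
  split_ifs <;> linarith

theorem aggregative_self_dual_general
    (f g : ℝ → ℝ)
    (hmap : f '' Set.Icc (0:ℝ) 1 = Set.Icc (0:ℝ) 1)
    (hfg : ∀ y ∈ Set.Icc (0:ℝ) 1, f (g y) = y)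
    (x y : ℝ) (hx : x ∈ Set.Icc (0:ℝ) 1) (hy : y ∈ Set.Icc (0:ℝ) 1) :
    g (1 - f (g (cut (f x + f y - 1/2)))) =
      g (cut (f (g (1 - f x)) + f (g (1 - f y)) - 1/2)) := by
  have hfx : f x ∈ Set.Icc (0:ℝ) 1 := hmap ▸ Set.mem_image_of_mem f hx
  have hfy : f y ∈ Set.Icc (0:ℝ) 1 := hmap ▸ Set.mem_image_of_mem f hy
  rw [hfg _ (cut_mem_Icc _), hfg _ (Set.Icc.mem_iff_one_sub_mem.mp hfx),
    hfg _ (Set.Icc.mem_iff_one_sub_mem.mp hfy), ← cut_one_sub]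
  congr 2
  ring

theorem aggregative_self_dual
    (f g : ℝ → ℝ)
    (hf : StrictMonoOn f (Set.Icc (0:ℝ) 1))
    (hmap : f '' Set.Icc (0:ℝ) 1 = Set.Icc (0:ℝ) 1)
    (hgf : ∀ x ∈ Set.Icc (0:ℝ) 1, g (f x) = x)
    (hfg : ∀ y ∈ Set.Icc (0:ℝ) 1, f (g y) = y)
    (ν : ℝ) (hν : ν ∈ Set.Icc (0:ℝ) 1) (hν2 : f ν = 1/2)
    (x y : ℝ) (hx : x ∈ Set.Icc (0:ℝ) 1) (hy : y ∈ Set.Icc (0:ℝ) 1)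
    (h1 : 0 < f x + f y - 1/2) (h2 : f x + f y - 1/2 < 1) :
    g (1 - f (g (cut (f x + f y - 1/2)))) =
      g (cut (f (g (1 - f x)) + f (g (1 - f y)) - 1/2)) :=
  aggregative_self_dual_general f g hmap hfg x y hx hy
end

section
/- For fixed x, a, and λ > 0, the squashing function S^{(β)}_{a,λ}(x) converges as β → ∞ to the generalized cutting function [(x - (a - λ/2))/λ] clamped to [0,1]; in particular, for a = 1/2 and λ = 1, the limit is the cutting function [x]. -/
noncomputable def squash (β a lam x : ℝ) : ℝ :=
  (1 / (lam * β)) * Real.log ((1 + Real.exp (β * (x - (a - lam / 2)))) /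
    (1 + Real.exp (β * (x - (a + lam / 2)))))

open Filter Real

lemma log_one_add_exp (t : ℝ) :
    Real.log (1 + Real.exp t) = max 0 t + Real.log (1 + Real.exp (-|t|)) := by
  rcases le_total t 0 with h | h
  · rw [abs_of_nonpos h, neg_neg, max_eq_left h, zero_add]
  · rw [abs_of_nonneg h, max_eq_right h]
    have h1 : (1 : ℝ) + Real.exp t = Real.exp t * (1 + Real.exp (-t)) := by
      rw [mul_add, mul_one, ← Real.exp_add]
      simp [add_comm]
    rw [h1, Real.log_mul (Real.exp_ne_zero t) (by positivity), Real.log_exp]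

lemma aux_tendsto (c : ℝ) :
    Tendsto (fun β : ℝ => (1/β) * Real.log (1 + Real.exp (β * c))) atTop
      (nhds (max 0 c)) := by
  have key : ∀ β : ℝ, 0 < β →
      (1/β) * Real.log (1 + Real.exp (β * c)) =
        max 0 c + (1/β) * Real.log (1 + Real.exp (-(β * |c|))) := by
    intro β hβ
    have habs : |β * c| = β * |c| := by rw [abs_mul, abs_of_pos hβ]
    rw [log_one_add_exp (β * c), habs, mul_add]
    congr 1
    rw [mul_max_of_nonneg _ _ (le_of_lt (by positivity : (0:ℝ) < 1/β)), mul_zero,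
      ← mul_assoc, one_div, inv_mul_cancel₀ hβ.ne', one_mul]
  have h0 : Tendsto (fun β : ℝ => (1/β) * Real.log (1 + Real.exp (-(β * |c|))))
      atTop (nhds 0) := by
    apply squeeze_zero' (g := fun β : ℝ => Real.log 2 / β)
    · filter_upwards [eventually_gt_atTop 0] with β hβ
      have hl : 0 ≤ Real.log (1 + Real.exp (-(β * |c|))) :=
        Real.log_nonneg (by linarith [Real.exp_pos (-(β * |c|))])
      exact mul_nonneg (by positivity) hl
    · filter_upwards [eventually_gt_atTop 0] with β hβ
      have h1 : Real.exp (-(β * |c|)) ≤ 1 := by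
        rw [Real.exp_le_one_iff]
        have : 0 ≤ β * |c| := by positivity
        linarith
      have h2 : Real.log (1 + Real.exp (-(β * |c|))) ≤ Real.log 2 := by
        apply Real.log_le_log (by positivity); linarith
      calc (1/β) * Real.log (1 + Real.exp (-(β * |c|)))
          ≤ (1/β) * Real.log 2 := by
            exact mul_le_mul_of_nonneg_left h2 (by positivity)
        _ = Real.log 2 / β := by ring
    · exact tendsto_const_nhds.div_atTop tendsto_id
  have hsum := tendsto_const_nhds.add h0 (a := max 0 c)
  rw [add_zero] at hsum
  refine hsum.congr' ?_
  filter_upwards [eventually_gt_atTop 0] with β hβ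
  exact (key β hβ).symm

theorem squash_tendsto_cut (a lam x : ℝ) (hlam : 0 < lam) :
    Filter.Tendsto (fun β => squash β a lam x) Filter.atTop
      (nhds (cut ((x - (a - lam / 2)) / lam))) ∧
    (a = 1/2 → lam = 1 →
      Filter.Tendsto (fun β => squash β a lam x) Filter.atTop (nhds (cut x))) := by
  set u := x - (a - lam / 2) with hu
  set v := x - (a + lam / 2) with hv
  have hvu : v = u - lam := by rw [hu, hv]; ring
  have hmain : Tendsto (fun β => squash β a lam x) atTop
      (nhds (cut (u / lam))) := by
    have heq : ∀ β : ℝ, 0 < β → squash β a lam x =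
        (1/lam) * ((1/β) * Real.log (1 + Real.exp (β * u)) -
          (1/β) * Real.log (1 + Real.exp (β * v))) := by
      intro β hβ
      unfold squash
      rw [Real.log_div (by positivity) (by positivity)]
      field_simp
      rw [hu, hv]; ring_nf
    have hlim : Tendsto (fun β : ℝ =>
        (1/lam) * ((1/β) * Real.log (1 + Real.exp (β * u)) -
          (1/β) * Real.log (1 + Real.exp (β * v)))) atTop
        (nhds ((1/lam) * (max 0 u - max 0 v))) :=
      (((aux_tendsto u).sub (aux_tendsto v)).const_mul _)
    have hcut : cut (u / lam) = (1/lam) * (max 0 u - max 0 v) := by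
      rw [hvu]; unfold cut
      rcases le_total u 0 with h | h
      · have h1 : u / lam ≤ 0 := div_nonpos_of_nonpos_of_nonneg h hlam.le
        rw [min_eq_right (le_trans h1 zero_le_one), max_eq_left h1,
          max_eq_left h, max_eq_left (by linarith : u - lam ≤ 0)]
        ring
      · rcases le_total u lam with h2 | h2
        · have h1 : u / lam ≤ 1 := by rw [div_le_one hlam]; exact h2
          have h3 : 0 ≤ u / lam := by positivity
          rw [min_eq_right h1, max_eq_right h3, max_eq_right h,
            max_eq_left (by linarith : u - lam ≤ 0)]
          field_simp
          ring
        · have h1 : 1 ≤ u / lam := by rw [le_div_iff₀ hlam]; linarith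
          rw [min_eq_left h1, max_eq_right zero_le_one, max_eq_right h,
            max_eq_right (by linarith : 0 ≤ u - lam)]
          field_simp
          ring
    rw [hcut]
    refine hlim.congr' ?_
    filter_upwards [eventually_gt_atTop 0] with β hβ
    exact (heq β hβ).symm
  refine ⟨hmain, fun ha hl => ?_⟩
  have hx : u / lam = x := by rw [hu, ha, hl]; ring
  rw [hx] at hmain
  exact hmain
end

section
/- The squashing function is self-dual in the sense S^{(β)}_{a,λ}(x) + S^{(β)}_{a,λ}(2a - x) = 1 for all real x, with λ > 0 and β > 0. -/
open Real

lemma log_one_add_exp_sub_log_one_add_exp_neg (u : ℝ) :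
    log (1 + exp u) - log (1 + exp (-u)) = u := by
  have h : 1 + exp u = exp u * (1 + exp (-u)) := by
    rw [mul_add, ← exp_add, add_neg_cancel, exp_zero, mul_one, add_comm]
  rw [h, log_mul (exp_pos u).ne' (by positivity), log_exp, add_sub_cancel_right]

lemma squash_eq_sub (β a lam x : ℝ) :
    squash β a lam x = (1 / (lam * β)) *
      (log (1 + exp (β * (x - (a - lam / 2)))) - log (1 + exp (β * (x - (a + lam / 2))))) := by
  rw [squash, log_div (by positivity) (by positivity)]

theorem squash_self_dual (a lam β x : ℝ) (hlam : 0 < lam) (hβ : 0 < β) :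
    squash β a lam x + squash β a lam (2 * a - x) = 1 := by
  have reflect_lower : β * (2 * a - x - (a - lam / 2)) = -(β * (x - (a + lam / 2))) := by ring
  have reflect_upper : β * (2 * a - x - (a + lam / 2)) = -(β * (x - (a - lam / 2))) := by ring
  rw [squash_eq_sub, squash_eq_sub, reflect_lower, reflect_upper, ← mul_add]
  have sum_eq : log (1 + exp (β * (x - (a - lam / 2)))) - log (1 + exp (β * (x - (a + lam / 2))))
      + (log (1 + exp (-(β * (x - (a + lam / 2))))) - log (1 + exp (-(β * (x - (a - lam / 2))))))
      = lam * β := by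
    linarith [log_one_add_exp_sub_log_one_add_exp_neg (β * (x - (a - lam / 2))),
      log_one_add_exp_sub_log_one_add_exp_neg (β * (x - (a + lam / 2)))]
  rw [sum_eq, one_div_mul_cancel (mul_pos hlam hβ).ne']
end
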